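/- arXiv:1509.04736 — 8 statements merged into one kernel-verified Lean document; each statement's English description precedes it below -/
import Mathlib

section
/- In the quantum spatial ageing algebra A, for every positive integer i, the identity E·Y^i = ((q^{-2i}-1)/(q^{-2}-1))·X·Y^{i-1} + q^{-i}·Y^i·E holds. -/
/-- Generators of the quantum spatial ageing algebra. -/
inductive QGen : Type
  | E | K | Kinv | X | Y

open FreeAlgebra in
/-- Defining relations of the quantum spatial ageing algebra
`EK = q⁻²KE`, `XK = q⁻¹KX`, `YK = qKY`, `EX = qXE`, `EY = X + q⁻¹YE`, `qYX = XY`,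
together with `K K⁻¹ = K⁻¹ K = 1`. -/
inductive QSARel (k : Type) [Field k] (q : k) :
    FreeAlgebra k QGen → FreeAlgebra k QGen → Prop
  | KKinv : QSARel k q (ι k QGen.K * ι k QGen.Kinv) 1
  | KinvK : QSARel k q (ι k QGen.Kinv * ι k QGen.K) 1
  | EK : QSARel k q (ι k QGen.E * ι k QGen.K) ((q ^ 2)⁻¹ • (ι k QGen.K * ι k QGen.E))
  | XK : QSARel k q (ι k QGen.X * ι k QGen.K) (q⁻¹ • (ι k QGen.K * ι k QGen.X))
  | YK : QSARel k q (ι k QGen.Y * ι k QGen.K) (q • (ι k QGen.K * ι k QGen.Y))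
  | EX : QSARel k q (ι k QGen.E * ι k QGen.X) (q • (ι k QGen.X * ι k QGen.E))
  | EY : QSARel k q (ι k QGen.E * ι k QGen.Y)
      (ι k QGen.X + q⁻¹ • (ι k QGen.Y * ι k QGen.E))
  | YX : QSARel k q (q • (ι k QGen.Y * ι k QGen.X)) (ι k QGen.X * ι k QGen.Y)

/-- The quantum spatial ageing algebra `𝒜 = 𝕂_q[X,Y] ⋊ U_q^{≥0}(sl₂)`. -/
noncomputable abbrev QSA (k : Type) [Field k] (q : k) : Type := RingQuot (QSARel k q)

noncomputable def Egen (k : Type) [Field k] (q : k) : QSA k q :=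
  RingQuot.mkAlgHom k (QSARel k q) (FreeAlgebra.ι k QGen.E)
noncomputable def Kgen (k : Type) [Field k] (q : k) : QSA k q :=
  RingQuot.mkAlgHom k (QSARel k q) (FreeAlgebra.ι k QGen.K)
noncomputable def Kinvgen (k : Type) [Field k] (q : k) : QSA k q :=
  RingQuot.mkAlgHom k (QSARel k q) (FreeAlgebra.ι k QGen.Kinv)
noncomputable def Xgen (k : Type) [Field k] (q : k) : QSA k q :=
  RingQuot.mkAlgHom k (QSARel k q) (FreeAlgebra.ι k QGen.X)
noncomputable def Ygen (k : Type) [Field k] (q : k) : QSA k q :=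
  RingQuot.mkAlgHom k (QSARel k q) (FreeAlgebra.ι k QGen.Y)

/-- The normal element `φ = EY - qYE`. -/
noncomputable def phi (k : Type) [Field k] (q : k) : QSA k q :=
  Egen k q * Ygen k q - q • (Ygen k q * Egen k q)

/-! Pushing `E` rightwards through `Y ^ (n + 1)` one factor at a time, each `EY = X + q⁻¹YE`
leaves an `X`, which `YX = q⁻¹XY` then moves to the front at the cost of `q⁻²` per `Y` it
passes. The coefficient of `XYⁿ` is therefore the geometric sum `∑_{j ≤ n} q^{-2j}`, whose
closed form is `(q^{-2(n+1)} - 1) / (q⁻² - 1)`. -/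

open Finset

section Relations

variable (k : Type) [Field k] (q : k)

theorem Egen_mul_Ygen : Egen k q * Ygen k q = Xgen k q + q⁻¹ • (Ygen k q * Egen k q) := by
  simpa only [Egen, Ygen, Xgen, map_mul, map_add, map_smul] using
    RingQuot.mkAlgHom_rel k (QSARel.EY (k := k) (q := q))

-- `qYX = XY` scaled by `q⁻¹ ^ 2`; `q⁻¹ ^ 2 * q = q⁻¹` holds even at `q = 0`, where `q⁻¹ = 0`.
theorem inv_smul_Ygen_mul_Xgen :
    q⁻¹ • (Ygen k q * Xgen k q) = q⁻¹ ^ 2 • (Xgen k q * Ygen k q) := by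
  have hYX := RingQuot.mkAlgHom_rel k (QSARel.YX (k := k) (q := q))
  simp only [map_mul, map_smul] at hYX
  have hq : q⁻¹ ^ 2 * q = q⁻¹ := by
    rcases eq_or_ne q 0 with rfl | hq
    · simp
    · field_simp
  rw [Xgen, Ygen, ← hYX, smul_smul, hq]

theorem Egen_mul_Ygen_pow_succ (n : ℕ) :
    Egen k q * Ygen k q ^ (n + 1) =
      (∑ j ∈ range (n + 1), (q⁻¹ ^ 2) ^ j) • (Xgen k q * Ygen k q ^ n) +
        q⁻¹ ^ (n + 1) • (Ygen k q ^ (n + 1) * Egen k q) := by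
  induction n with
  | zero => simp [Egen_mul_Ygen]
  | succ n ih =>
    have hpush : Egen k q * Ygen k q ^ (n + 2) =
        Xgen k q * Ygen k q ^ (n + 1) + q⁻¹ • (Ygen k q * (Egen k q * Ygen k q ^ (n + 1))) := by
      rw [pow_succ', ← mul_assoc, Egen_mul_Ygen, add_mul, smul_mul_assoc, mul_assoc]
    have hYXY : q⁻¹ • (Ygen k q * (Xgen k q * Ygen k q ^ n)) =
        q⁻¹ ^ 2 • (Xgen k q * Ygen k q ^ (n + 1)) := by
      rw [← mul_assoc, ← smul_mul_assoc, inv_smul_Ygen_mul_Xgen, smul_mul_assoc, mul_assoc,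
        ← pow_succ']
    rw [hpush, ih, mul_add, mul_smul_comm, mul_smul_comm, smul_add, smul_comm q⁻¹ (∑ j ∈ _, _),
      hYXY, ← mul_assoc, ← pow_succ', geom_sum_succ (n := n + 1)]
    module

end Relations

theorem stmt0_general (k : Type) [Field k] (q : k)
    (hq' : ∀ n : ℕ, n ≠ 0 → q ^ n ≠ 1) (i : ℕ) :
    Egen k q * Ygen k q ^ i =
      ((q⁻¹ ^ (2 * i) - 1) / (q⁻¹ ^ 2 - 1)) • (Xgen k q * Ygen k q ^ (i - 1)) +
        q⁻¹ ^ i • (Ygen k q ^ i * Egen k q) := by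
  cases i with
  -- at `i = 0` the coefficient `(1 - 1) / _` vanishes, so the truncated `i - 1` is harmless
  | zero => simp
  | succ n =>
    have hq2 : q⁻¹ ^ 2 ≠ 1 := by
      rw [inv_pow, Ne, inv_eq_one]
      exact hq' 2 two_ne_zero
    rw [Egen_mul_Ygen_pow_succ, geom_sum_eq hq2, ← pow_mul, Nat.add_sub_cancel]

/-- Lemma: `EYⁱ = ((q^{-2i}-1)/(q^{-2}-1)) X Y^{i-1} + q^{-i} Yⁱ E`. -/
theorem stmt0 (k : Type) [Field k] (q : k) (hq : q ≠ 0)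
    (hq' : ∀ n : ℕ, n ≠ 0 → q ^ n ≠ 1) (i : ℕ) (hi : 1 ≤ i) :
    Egen k q * Ygen k q ^ i =
      ((q⁻¹ ^ (2 * i) - 1) / (q⁻¹ ^ 2 - 1)) • (Xgen k q * Ygen k q ^ (i - 1)) +
        q⁻¹ ^ i • (Ygen k q ^ i * Egen k q) :=
  stmt0_general k q hq' i
end

section
/- In the quantum spatial ageing algebra A, the element φ = EY − qYE satisfies the commutation relations Xφ = φX, Yφ = qφY, Eφ = q^{-1}φE and Kφ = qφK; in particular φ is a normal element of A. -/
/-!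
Substituting the relation `EY = X + q⁻¹YE` gives `φ = X + (q⁻¹ - q)YE`, and the relations
`Xφ = φX`, `Yφ = qφY`, `Eφ = q⁻¹φE` are then short computations with the defining relations;
`Kφ = qφK` is read off `φ = EY - qYE` directly, since `K` `q`-commutes with `E` and `Y`, and
conjugating by `K` gives `K⁻¹φ = q⁻¹φK⁻¹`. The elements `a` with `φa ∈ 𝒜φ` and `aφ ∈ φ𝒜` form a
subalgebra; it contains every generator, as each generator `g` satisfies `gφ = c φg` with
`c ≠ 0`, so it is all of `𝒜`, i.e. `φ𝒜 = 𝒜φ`.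
-/

section Normalizing

variable (R : Type*) {A : Type*} [CommSemiring R] [Semiring A] [Algebra R A]

def normalizingSubalgebra (x : A) : Subalgebra R A where
  carrier := {a | (∃ b, x * a = b * x) ∧ ∃ b, a * x = x * b}
  mul_mem' := by
    rintro a a' ⟨⟨b, hb⟩, ⟨c, hc⟩⟩ ⟨⟨b', hb'⟩, ⟨c', hc'⟩⟩
    exact ⟨⟨b * b', by rw [← mul_assoc, hb, mul_assoc, hb', mul_assoc]⟩,
      ⟨c * c', by rw [mul_assoc, hc', ← mul_assoc, hc, mul_assoc]⟩⟩
  add_mem' := by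
    rintro a a' ⟨⟨b, hb⟩, ⟨c, hc⟩⟩ ⟨⟨b', hb'⟩, ⟨c', hc'⟩⟩
    exact ⟨⟨b + b', by rw [mul_add, hb, hb', add_mul]⟩,
      ⟨c + c', by rw [add_mul, hc, hc', mul_add]⟩⟩
  algebraMap_mem' r :=
    ⟨⟨algebraMap R A r, (Algebra.commutes r x).symm⟩, ⟨algebraMap R A r, Algebra.commutes r x⟩⟩

theorem range_mul_left_eq_range_mul_right {x : A} (h : normalizingSubalgebra R x = ⊤) :
    Set.range (fun a : A => x * a) = Set.range (fun a : A => a * x) := by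
  ext y
  constructor
  · rintro ⟨a, rfl⟩
    obtain ⟨⟨b, hb⟩, -⟩ := h.ge (Algebra.mem_top (x := a))
    exact ⟨b, hb.symm⟩
  · rintro ⟨a, rfl⟩
    obtain ⟨-, ⟨b, hb⟩⟩ := h.ge (Algebra.mem_top (x := a))
    exact ⟨b, hb.symm⟩

end Normalizing

section SkewCommuting

variable {K A : Type*} [Field K] [Semiring A] [Algebra K A] {x g : A} {c : K}

theorem mem_normalizingSubalgebra_of_mul_eq_smul (hc : c ≠ 0) (h : g * x = c • (x * g)) :
    g ∈ normalizingSubalgebra K x :=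
  ⟨⟨c⁻¹ • g, by rw [smul_mul_assoc, h, smul_smul, inv_mul_cancel₀ hc, one_smul]⟩,
    ⟨c • g, by rw [mul_smul_comm, h]⟩⟩

theorem mul_eq_inv_smul_of_mul_eq_one {u : A} (hgu : g * u = 1) (hug : u * g = 1)
    (hc : c ≠ 0) (h : g * x = c • (x * g)) : u * x = c⁻¹ • (x * u) := by
  calc u * x = u * x * (g * u) := by rw [hgu, mul_one]
    _ = c⁻¹ • (u * (c • (x * g)) * u) := by
      rw [mul_smul_comm, smul_mul_assoc, smul_smul, inv_mul_cancel₀ hc, one_smul]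
      simp only [mul_assoc]
    _ = c⁻¹ • (x * u) := by rw [← h, ← mul_assoc u, hug, one_mul]

end SkewCommuting

theorem RingQuot.adjoin_range_mkAlgHom_ι (R X : Type*) [CommSemiring R]
    (r : FreeAlgebra R X → FreeAlgebra R X → Prop) :
    Algebra.adjoin R (Set.range fun x => RingQuot.mkAlgHom R r (FreeAlgebra.ι R x)) = ⊤ := by
  rw [Set.range_comp', Algebra.adjoin_image, FreeAlgebra.adjoin_range_ι, Algebra.map_top,
    AlgHom.range_eq_top]
  exact RingQuot.mkAlgHom_surjective R r

namespace QSA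

variable (k : Type) [Field k] (q : k)

theorem Kgen_mul_Kinvgen : Kgen k q * Kinvgen k q = 1 := by
  simpa [Kgen, Kinvgen] using RingQuot.mkAlgHom_rel k (QSARel.KKinv (q := q))

theorem Kinvgen_mul_Kgen : Kinvgen k q * Kgen k q = 1 := by
  simpa [Kgen, Kinvgen] using RingQuot.mkAlgHom_rel k (QSARel.KinvK (q := q))

theorem Egen_mul_Kgen : Egen k q * Kgen k q = (q ^ 2)⁻¹ • (Kgen k q * Egen k q) := by
  simpa [Egen, Kgen] using RingQuot.mkAlgHom_rel k (QSARel.EK (q := q))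

theorem Ygen_mul_Kgen : Ygen k q * Kgen k q = q • (Kgen k q * Ygen k q) := by
  simpa [Kgen, Ygen] using RingQuot.mkAlgHom_rel k (QSARel.YK (q := q))

theorem Egen_mul_Xgen : Egen k q * Xgen k q = q • (Xgen k q * Egen k q) := by
  simpa [Egen, Xgen] using RingQuot.mkAlgHom_rel k (QSARel.EX (q := q))

theorem Egen_mul_Ygen : Egen k q * Ygen k q = Xgen k q + q⁻¹ • (Ygen k q * Egen k q) := by
  simpa [Egen, Xgen, Ygen] using RingQuot.mkAlgHom_rel k (QSARel.EY (q := q))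

theorem Xgen_mul_Ygen : Xgen k q * Ygen k q = q • (Ygen k q * Xgen k q) := by
  simpa [Xgen, Ygen] using (RingQuot.mkAlgHom_rel k (QSARel.YX (q := q))).symm

theorem phi_eq_Xgen_add : phi k q = Xgen k q + (q⁻¹ - q) • (Ygen k q * Egen k q) := by
  rw [phi, Egen_mul_Ygen]
  module

theorem Xgen_mul_phi : Xgen k q * phi k q = phi k q * Xgen k q := by
  have hXYE : Xgen k q * (Ygen k q * Egen k q) = Ygen k q * Egen k q * Xgen k q := by
    rw [← mul_assoc, Xgen_mul_Ygen, mul_assoc, Egen_mul_Xgen, smul_mul_assoc, mul_smul_comm,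
      mul_assoc]
  rw [phi_eq_Xgen_add, mul_add, add_mul, mul_smul_comm, smul_mul_assoc, hXYE]

variable {q} (hq : q ≠ 0)
include hq

theorem Ygen_mul_phi : Ygen k q * phi k q = q • (phi k q * Ygen k q) := by
  have hYEY : Ygen k q * Egen k q * Ygen k q =
      Ygen k q * Xgen k q + q⁻¹ • (Ygen k q * Ygen k q * Egen k q) := by
    rw [mul_assoc, Egen_mul_Ygen, mul_add, mul_smul_comm, mul_assoc]
  rw [phi_eq_Xgen_add, mul_add, add_mul, mul_smul_comm, smul_mul_assoc, hYEY, Xgen_mul_Ygen,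
    ← mul_assoc]
  match_scalars <;> field_simp
  ring

theorem Egen_mul_phi : Egen k q * phi k q = q⁻¹ • (phi k q * Egen k q) := by
  have hEYE : Egen k q * (Ygen k q * Egen k q) =
      Xgen k q * Egen k q + q⁻¹ • (Ygen k q * Egen k q * Egen k q) := by
    rw [← mul_assoc, Egen_mul_Ygen, add_mul, smul_mul_assoc]
  rw [phi_eq_Xgen_add, mul_add, add_mul, mul_smul_comm, smul_mul_assoc, hEYE, Egen_mul_Xgen]
  match_scalars <;> field_simp
  ring

theorem Kgen_mul_Egen : Kgen k q * Egen k q = q ^ 2 • (Egen k q * Kgen k q) := by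
  rw [Egen_mul_Kgen, smul_smul, mul_inv_cancel₀ (pow_ne_zero 2 hq), one_smul]

theorem Kgen_mul_Ygen : Kgen k q * Ygen k q = q⁻¹ • (Ygen k q * Kgen k q) := by
  rw [Ygen_mul_Kgen, smul_smul, inv_mul_cancel₀ hq, one_smul]

theorem Kgen_mul_phi : Kgen k q * phi k q = q • (phi k q * Kgen k q) := by
  have hKEY : Kgen k q * (Egen k q * Ygen k q) = q • (Egen k q * Ygen k q * Kgen k q) := by
    rw [← mul_assoc, Kgen_mul_Egen k hq, smul_mul_assoc, mul_assoc, Kgen_mul_Ygen k hq,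
      mul_smul_comm, smul_smul, ← mul_assoc]
    congr 1
    field_simp
  have hKYE : Kgen k q * (Ygen k q * Egen k q) = q • (Ygen k q * Egen k q * Kgen k q) := by
    rw [← mul_assoc, Kgen_mul_Ygen k hq, smul_mul_assoc, mul_assoc, Kgen_mul_Egen k hq,
      mul_smul_comm, smul_smul, ← mul_assoc]
    congr 1
    field_simp
  rw [phi, mul_sub, sub_mul, mul_smul_comm, smul_mul_assoc, hKEY, hKYE, smul_sub, smul_comm]

theorem Kinvgen_mul_phi : Kinvgen k q * phi k q = q⁻¹ • (phi k q * Kinvgen k q) :=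
  mul_eq_inv_smul_of_mul_eq_one (Kgen_mul_Kinvgen k q) (Kinvgen_mul_Kgen k q) hq
    (Kgen_mul_phi k hq)

theorem normalizingSubalgebra_phi_eq_top : normalizingSubalgebra k (phi k q) = ⊤ := by
  refine top_unique ?_
  rw [← RingQuot.adjoin_range_mkAlgHom_ι k QGen (QSARel k q), Algebra.adjoin_le_iff]
  rintro _ ⟨g, rfl⟩
  cases g with
  | E => exact mem_normalizingSubalgebra_of_mul_eq_smul (inv_ne_zero hq) (Egen_mul_phi k hq)
  | K => exact mem_normalizingSubalgebra_of_mul_eq_smul hq (Kgen_mul_phi k hq)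
  | Kinv => exact mem_normalizingSubalgebra_of_mul_eq_smul (inv_ne_zero hq) (Kinvgen_mul_phi k hq)
  | X => exact ⟨⟨Xgen k q, (Xgen_mul_phi k q).symm⟩, ⟨Xgen k q, Xgen_mul_phi k q⟩⟩
  | Y => exact mem_normalizingSubalgebra_of_mul_eq_smul hq (Ygen_mul_phi k hq)

end QSA

theorem stmt3_general (k : Type) [Field k] (q : k) (hq : q ≠ 0) :
    Xgen k q * phi k q = phi k q * Xgen k q ∧
    Ygen k q * phi k q = q • (phi k q * Ygen k q) ∧
    Egen k q * phi k q = q⁻¹ • (phi k q * Egen k q) ∧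
    Kgen k q * phi k q = q • (phi k q * Kgen k q) ∧
    Set.range (fun a : QSA k q => phi k q * a) =
      Set.range (fun a : QSA k q => a * phi k q) :=
  ⟨QSA.Xgen_mul_phi k q, QSA.Ygen_mul_phi k hq, QSA.Egen_mul_phi k hq, QSA.Kgen_mul_phi k hq,
    range_mul_left_eq_range_mul_right k (QSA.normalizingSubalgebra_phi_eq_top k hq)⟩

/-- `Xφ = φX`, `Yφ = qφY`, `Eφ = q⁻¹φE`, `Kφ = qφK`;
in particular `φ` is a normal element of `𝒜`, i.e. `φ𝒜 = 𝒜φ`. -/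
theorem stmt3 (k : Type) [Field k] (q : k) (hq : q ≠ 0)
    (hq' : ∀ n : ℕ, n ≠ 0 → q ^ n ≠ 1) :
    Xgen k q * phi k q = phi k q * Xgen k q ∧
    Ygen k q * phi k q = q • (phi k q * Ygen k q) ∧
    Egen k q * phi k q = q⁻¹ • (phi k q * Egen k q) ∧
    Kgen k q * phi k q = q • (phi k q * Kgen k q) ∧
    Set.range (fun a : QSA k q => phi k q * a) =
      Set.range (fun a : QSA k q => a * phi k q) :=
  stmt3_general k q hq
end

section
/- Let E be a ring D[X,Y;σ,b,ρ] generated by a ring D and elements X, Y subject to Xα = σ(α)X and Yα = σ^{-1}(α)Y for all α ∈ D and XY − ρYX = b, where σ is an automorphism of D, b and ρ are central in D, ρ is invertible, and σ(ρ) = ρ. If α is a central element of D with ρα − σ(α) = b, then the element C := ρ(YX + α) satisfies C = XY + σ(α) and C is a normal element of E. -/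
/-!
The identity `ρ(YX + α) = XY + σ(α)` is `XY - ρYX = b = ρα - σ(α)` rearranged. The element `C`
it describes commutes with `D` (as `YX` does), while the two descriptions of `C` give
`XC = ρCX` and `CY = ρYC`. Since `ρ` is a unit commuting with `C`, each generator `x` of `E`
satisfies `Cx ∈ EC` and `xC ∈ CE`, and the elements with these two properties form a subring.
-/

section NormalizingSubring

variable {R : Type*} [Ring R]

def leftNormalizingSubring (c : R) : Subring R where
  carrier := {r | ∃ r', c * r = r' * c}
  one_mem' := ⟨1, by rw [mul_one, one_mul]⟩
  zero_mem' := ⟨0, by rw [mul_zero, zero_mul]⟩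
  add_mem' := by
    rintro x y ⟨x', hx⟩ ⟨y', hy⟩
    exact ⟨x' + y', by rw [mul_add, hx, hy, add_mul]⟩
  neg_mem' := by
    rintro x ⟨x', hx⟩
    exact ⟨-x', by rw [mul_neg, hx, neg_mul]⟩
  mul_mem' := by
    rintro x y ⟨x', hx⟩ ⟨y', hy⟩
    exact ⟨x' * y', by rw [← mul_assoc, hx, mul_assoc, hy, ← mul_assoc]⟩

def rightNormalizingSubring (c : R) : Subring R where
  carrier := {r | ∃ r', r * c = c * r'}
  one_mem' := ⟨1, by rw [mul_one, one_mul]⟩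
  zero_mem' := ⟨0, by rw [mul_zero, zero_mul]⟩
  add_mem' := by
    rintro x y ⟨x', hx⟩ ⟨y', hy⟩
    exact ⟨x' + y', by rw [add_mul, hx, hy, mul_add]⟩
  neg_mem' := by
    rintro x ⟨x', hx⟩
    exact ⟨-x', by rw [neg_mul, hx, mul_neg]⟩
  mul_mem' := by
    rintro x y ⟨x', hx⟩ ⟨y', hy⟩
    exact ⟨x' * y', by rw [mul_assoc, hy, ← mul_assoc, hx, mul_assoc]⟩

def normalizingSubring (c : R) : Subring R :=
  leftNormalizingSubring c ⊓ rightNormalizingSubring c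

theorem mem_normalizingSubring {c r : R} :
    r ∈ normalizingSubring c ↔ (∃ r', c * r = r' * c) ∧ ∃ r', r * c = c * r' :=
  Iff.rfl

theorem mem_normalizingSubring_of_commute {c x : R} (h : Commute c x) :
    x ∈ normalizingSubring c :=
  ⟨⟨x, h⟩, ⟨x, h.symm⟩⟩

theorem mem_normalizingSubring_of_mul_eq_units_mul_mul {c x : R} (u : Rˣ)
    (hu : Commute (u : R) c) (h : c * x = u * x * c) : x ∈ normalizingSubring c := by
  refine ⟨⟨u * x, h⟩, ⟨↑u⁻¹ * x, ?_⟩⟩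
  calc x * c = ↑u⁻¹ * (c * x) := by
        rw [h, ← mul_assoc, ← mul_assoc, Units.inv_mul, one_mul]
    _ = c * (↑u⁻¹ * x) := by rw [← mul_assoc, hu.units_inv_left.eq, mul_assoc]

theorem mem_normalizingSubring_of_mul_eq_units_mul_mul' {c x : R} (u : Rˣ)
    (hu : Commute (u : R) c) (h : x * c = u * c * x) : x ∈ normalizingSubring c := by
  refine mem_normalizingSubring_of_mul_eq_units_mul_mul u⁻¹ hu.units_inv_left ?_
  rw [mul_assoc, h, ← mul_assoc, ← mul_assoc, Units.inv_mul, one_mul]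

end NormalizingSubring

section TwistedGenerators

variable {D E : Type*} [Ring D] [Ring E] (f : D →+* E) (σ : D ≃+* D) {X Y c : E} {b ρ α : D}

theorem commute_mul_map (hX : ∀ d, X * f d = f (σ d) * X)
    (hY : ∀ d, Y * f d = f (σ.symm d) * Y) (d : D) : Commute (Y * X) (f d) := by
  calc Y * X * f d = Y * f (σ d) * X := by rw [mul_assoc, hX, ← mul_assoc]
    _ = f d * (Y * X) := by rw [hY, σ.symm_apply_apply, mul_assoc]

theorem map_mul_mul_add_map (hXY : X * Y - f ρ * (Y * X) = f b) (hsol : ρ * α - σ α = b) :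
    f ρ * (Y * X + f α) = X * Y + f (σ α) := by
  rw [← hsol, map_sub, map_mul, sub_eq_sub_iff_add_eq_add] at hXY
  rw [mul_add, hXY, add_comm]

theorem X_mul_eq_map_mul_mul (hX : ∀ d, X * f d = f (σ d) * X) (hσρ : σ ρ = ρ)
    (hc : c = f ρ * (Y * X + f α)) (hc' : c = X * Y + f (σ α)) : X * c = f ρ * c * X := by
  calc X * c = f ρ * (X * (Y * X) + X * f α) := by
        rw [hc, ← mul_assoc, hX, hσρ, mul_assoc, mul_add]
    _ = f ρ * ((X * Y + f (σ α)) * X) := by rw [hX, add_mul, mul_assoc]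
    _ = f ρ * c * X := by rw [hc', mul_assoc]

theorem mul_Y_eq_map_mul_mul (hY : ∀ d, Y * f d = f (σ.symm d) * Y)
    (hc : c = f ρ * (Y * X + f α)) (hc' : c = X * Y + f (σ α)) : c * Y = f ρ * Y * c := by
  calc c * Y = f ρ * (Y * X * Y + f α * Y) := by rw [hc, mul_assoc, add_mul]
    _ = f ρ * (Y * (X * Y + f (σ α))) := by
        rw [mul_add Y, hY, σ.symm_apply_apply, ← mul_assoc]
    _ = f ρ * Y * c := by rw [hc', mul_assoc]

end TwistedGenerators

theorem stmt6_general {D E : Type*} [Ring D] [Ring E] (f : D →+* E) (σ : D ≃+* D)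
    (b ρ α : D) (X Y : E)
    (hρ : ∀ d : D, ρ * d = d * ρ)
    (hα : ∀ d : D, α * d = d * α)
    (hρu : IsUnit ρ) (hσρ : σ ρ = ρ)
    (hX : ∀ d : D, X * f d = f (σ d) * X)
    (hY : ∀ d : D, Y * f d = f (σ.symm d) * Y)
    (hXY : X * Y - f ρ * (Y * X) = f b)
    (hsol : ρ * α - σ α = b)
    (hgen : Subring.closure (Set.range f ∪ {X, Y}) = ⊤) :
    f ρ * (Y * X + f α) = X * Y + f (σ α) ∧
    (∀ r : E, ∃ r' : E, f ρ * (Y * X + f α) * r = r' * (f ρ * (Y * X + f α))) ∧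
    (∀ r : E, ∃ r' : E, r * (f ρ * (Y * X + f α)) = f ρ * (Y * X + f α) * r') := by
  set C := f ρ * (Y * X + f α) with hC
  have hC' : C = X * Y + f (σ α) := map_mul_mul_add_map f σ hXY hsol
  have hCD (d : D) : Commute C (f d) :=
    (Commute.map (hρ d) f).mul_left
      ((commute_mul_map f σ hX hY d).add_left (Commute.map (hα d) f))
  have hρC : Commute ((hρu.map f).unit : E) C := (hCD ρ).symm
  have hgens : Set.range f ∪ {X, Y} ⊆ normalizingSubring C := by
    rintro _ (⟨d, rfl⟩ | rfl | rfl)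
    · exact mem_normalizingSubring_of_commute (hCD d)
    · exact mem_normalizingSubring_of_mul_eq_units_mul_mul' _ hρC
        (X_mul_eq_map_mul_mul f σ hX hσρ hC hC')
    · exact mem_normalizingSubring_of_mul_eq_units_mul_mul _ hρC
        (mul_Y_eq_map_mul_mul f σ hY hC hC')
  have hnormal (r : E) : r ∈ normalizingSubring C :=
    Subring.closure_le.mpr hgens (hgen ▸ Subring.mem_top r)
  exact ⟨hC', fun r => (mem_normalizingSubring.mp (hnormal r)).1,
    fun r => (mem_normalizingSubring.mp (hnormal r)).2⟩

/-- let `E = D[X,Y;σ,b,ρ]` be a ring containing (the image of) a ring `D`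
and elements `X, Y` with `Xα = σ(α)X`, `Yα = σ⁻¹(α)Y` for all `α ∈ D` and `XY − ρYX = b`,
where `σ ∈ Aut(D)`, `b, ρ` are central in `D`, `ρ` is invertible and `σ(ρ) = ρ`.
If `α` is central in `D` with `ρα − σ(α) = b`, then `C = ρ(YX + α)` satisfies
`C = XY + σ(α)` and `C` is a normal element of `E` (i.e. `CE = EC` elementwise). -/
theorem stmt6 {D E : Type*} [Ring D] [Ring E] (f : D →+* E) (σ : D ≃+* D)
    (b ρ α : D) (X Y : E)
    (hb : ∀ d : D, b * d = d * b) (hρ : ∀ d : D, ρ * d = d * ρ)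
    (hα : ∀ d : D, α * d = d * α)
    (hρu : IsUnit ρ) (hσρ : σ ρ = ρ)
    (hX : ∀ d : D, X * f d = f (σ d) * X)
    (hY : ∀ d : D, Y * f d = f (σ.symm d) * Y)
    (hXY : X * Y - f ρ * (Y * X) = f b)
    (hsol : ρ * α - σ α = b)
    (hgen : Subring.closure (Set.range f ∪ {X, Y}) = ⊤) :
    f ρ * (Y * X + f α) = X * Y + f (σ α) ∧
    (∀ r : E, ∃ r' : E, f ρ * (Y * X + f α) * r = r' * (f ρ * (Y * X + f α))) ∧
    (∀ r : E, ∃ r' : E, r * (f ρ * (Y * X + f α)) = f ρ * (Y * X + f α) * r') :=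
  stmt6_general f σ b ρ α X Y hρ hα hρu hσρ hX hY hXY hsol hgen
end

section
/- The element Z := φYK^{-1}, with φ = EY − qYE, is central in the quotient algebra A/(X), and Z ≡ (1−q^2)EY^2K^{-1} mod (X). -/
/-!
Modulo `X` the relations of `𝒜` say that any two of the generators `E, Y, K, K⁻¹` commute up to a
scalar factor (a power of `q`). In `𝒜/(X)` one has `YE = qEY`, hence `φ = (1 - q²)EY` and
`Z = (1 - q²)EY²K⁻¹`. A monomial commutes with a generator up to the product of the factors of its
letters, and for `EY²K⁻¹` these products are all `1`; so it commutes with every generator, hence is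
central.
-/

def SkewCommute {R A : Type*} [CommSemiring R] [Semiring A] [Algebra R A] (c : R) (a b : A) :
    Prop :=
  a * b = c • (b * a)

namespace SkewCommute

variable {R A : Type*} [CommSemiring R] [Semiring A] [Algebra R A] {a b g : A} {c d : R}

theorem self (a : A) : SkewCommute (1 : R) a a := by
  rw [SkewCommute, one_smul]

theorem commute (h : SkewCommute (1 : R) a b) : Commute a b := by
  rw [SkewCommute, one_smul] at h
  exact h

theorem of_mul_eq_one {u v : A} (huv : u * v = 1) (hvu : v * u = 1) :
    SkewCommute (1 : R) u v := by
  rw [SkewCommute, huv, hvu, one_smul]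

theorem mul_right (ha : SkewCommute c g a) (hb : SkewCommute d g b) :
    SkewCommute (c * d) g (a * b) := by
  rw [SkewCommute, ← mul_assoc, ha, smul_mul_assoc, mul_assoc, hb, mul_smul_comm, smul_smul,
    mul_assoc]

theorem pow_right (h : SkewCommute c g a) (n : ℕ) : SkewCommute (c ^ n) g (a ^ n) := by
  induction n with
  | zero => rw [pow_zero, pow_zero, SkewCommute, one_smul, one_mul, mul_one]
  | succ n ih => rw [pow_succ, pow_succ]; exact ih.mul_right h

theorem inv_left {u v : A} (huv : u * v = 1) (hvu : v * u = 1) (h : SkewCommute c a u) :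
    SkewCommute c v a := by
  calc v * a = v * (a * u) * v := by rw [mul_assoc v, mul_assoc, huv, mul_one]
    _ = c • (a * v) := by
      rw [h, mul_smul_comm, smul_mul_assoc, ← mul_assoc v, hvu, one_mul]

theorem symm {F : Type*} [Semifield F] [Algebra F A] {c : F} (hc : c ≠ 0)
    (h : SkewCommute c a b) : SkewCommute c⁻¹ b a := by
  rw [SkewCommute, h, smul_smul, inv_mul_cancel₀ hc, one_smul]

end SkewCommute

theorem FreeAlgebra.commute_of_forall_commute_ι {R X A : Type*} [CommSemiring R] [Semiring A]
    [Algebra R A] {f : FreeAlgebra R X →ₐ[R] A} (hf : Function.Surjective f) {z : A}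
    (hz : ∀ x, Commute z (f (FreeAlgebra.ι R x))) (a : A) : Commute z a := by
  refine Algebra.commute_of_mem_adjoin_of_forall_mem_commute (R := R)
    (s := Set.range (f ∘ FreeAlgebra.ι R)) ?_ (by rintro _ ⟨x, rfl⟩; exact hz x)
  rw [Algebra.adjoin_range_eq_range_freeAlgebra_lift, FreeAlgebra.lift_comp_ι]
  exact hf a

section QuotientByX

variable (k : Type) [Field k] (q : k)

noncomputable abbrev QSAModX : Type := (TwoSidedIdeal.span {Xgen k q}).ringCon.Quotient

noncomputable abbrev modX : QSA k q →ₐ[k] QSAModX k q := RingCon.mkₐ k _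

variable {k q}

theorem modX_eq_zero_iff {a : QSA k q} :
    modX k q a = 0 ↔ a ∈ TwoSidedIdeal.span {Xgen k q} := by
  rw [← map_zero (modX k q), RingCon.mkₐ_apply, RingCon.mkₐ_apply, RingCon.eq,
    TwoSidedIdeal.rel_iff, sub_zero]

variable (k q)

theorem modX_Xgen : modX k q (Xgen k q) = 0 :=
  modX_eq_zero_iff.2 (TwoSidedIdeal.subset_span rfl)

theorem modX_rel {a b : FreeAlgebra k QGen} (h : QSARel k q a b) :
    modX k q (RingQuot.mkAlgHom k (QSARel k q) a) = modX k q (RingQuot.mkAlgHom k (QSARel k q) b) :=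
  congrArg _ (RingQuot.mkAlgHom_rel k h)

local notation "e" => modX k q (Egen k q)
local notation "y" => modX k q (Ygen k q)
local notation "κ" => modX k q (Kgen k q)
local notation "κ⁻" => modX k q (Kinvgen k q)

theorem modX_Kgen_mul_Kinvgen : κ * κ⁻ = 1 := by
  simpa only [Kgen, Kinvgen, map_mul, map_one] using modX_rel k q QSARel.KKinv

theorem modX_Kinvgen_mul_Kgen : κ⁻ * κ = 1 := by
  simpa only [Kgen, Kinvgen, map_mul, map_one] using modX_rel k q QSARel.KinvK

theorem skewCommute_modX_Egen_Kgen : SkewCommute (q ^ 2)⁻¹ e κ := by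
  simpa only [SkewCommute, Egen, Kgen, map_mul, map_smul] using modX_rel k q QSARel.EK

theorem skewCommute_modX_Ygen_Kgen : SkewCommute q y κ := by
  simpa only [SkewCommute, Ygen, Kgen, map_mul, map_smul] using modX_rel k q QSARel.YK

theorem skewCommute_modX_Egen_Ygen : SkewCommute q⁻¹ e y := by
  have h := modX_rel k q QSARel.EY
  simp only [map_add, map_mul, map_smul] at h
  rwa [← Xgen, modX_Xgen, zero_add] at h

variable {q}

theorem modX_phi (hq : q ≠ 0) : modX k q (phi k q) = (1 - q ^ 2) • (e * y) := by
  have hye := (skewCommute_modX_Egen_Ygen k q).symm (inv_ne_zero hq)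
  rw [inv_inv] at hye
  rw [phi, map_sub, map_mul, map_smul, map_mul, hye]
  module

theorem commute_modX_Egen_mul_Ygen_sq_mul_Kinvgen (hq : q ≠ 0) (z : QSAModX k q) :
    Commute (modX k q (Egen k q * Ygen k q ^ 2 * Kinvgen k q)) z := by
  have of_skewCommute {g : QSAModX k q} {a b c : k} (he : SkewCommute a g e)
      (hy : SkewCommute b g y) (hk : SkewCommute c g κ⁻) (habc : a * b ^ 2 * c = 1) :
      Commute (e * y ^ 2 * κ⁻) g := by
    have h := (he.mul_right (hy.pow_right 2)).mul_right hk
    rw [habc] at h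
    exact h.commute.symm
  have hey := skewCommute_modX_Egen_Ygen k q
  have heκ := skewCommute_modX_Egen_Kgen k q
  have hyκ := skewCommute_modX_Ygen_Kgen k q
  have hκκ' := modX_Kgen_mul_Kinvgen k q
  have hκ'κ := modX_Kinvgen_mul_Kgen k q
  have hκ'e := heκ.inv_left hκκ' hκ'κ
  have hκ'y := hyκ.inv_left hκκ' hκ'κ
  have hq2 : q ^ 2 ≠ 0 := pow_ne_zero 2 hq
  rw [map_mul, map_mul, map_pow]
  refine FreeAlgebra.commute_of_forall_commute_ι (f := (modX k q).comp (RingQuot.mkAlgHom k _))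
    ((RingCon.mkₐ_surjective (α := k) _).comp (RingQuot.mkAlgHom_surjective k _)) (fun x => ?_) z
  cases x with
  | E => exact of_skewCommute (.self _) hey (hκ'e.symm (inv_ne_zero hq2)) (by field_simp)
  | Y => exact of_skewCommute (hey.symm (inv_ne_zero hq)) (.self _) (hκ'y.symm hq) (by field_simp)
  | K =>
    exact of_skewCommute (heκ.symm (inv_ne_zero hq2)) (hyκ.symm hq) (.of_mul_eq_one hκκ' hκ'κ)
      (by field_simp)
  | Kinv => exact of_skewCommute hκ'e hκ'y (.self _) (by field_simp)
  | X =>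
    show Commute _ (modX k q (Xgen k q))
    rw [modX_Xgen]
    exact Commute.zero_right _

end QuotientByX

theorem stmt9_general (k : Type) [Field k] (q : k) (hq : q ≠ 0) :
    (∀ a : QSA k q,
        (phi k q * Ygen k q * Kinvgen k q) * a - a * (phi k q * Ygen k q * Kinvgen k q) ∈
          TwoSidedIdeal.span {Xgen k q}) ∧
    phi k q * Ygen k q * Kinvgen k q -
        (1 - q ^ 2) • (Egen k q * Ygen k q ^ 2 * Kinvgen k q) ∈
      TwoSidedIdeal.span {Xgen k q} := by
  have hZ : modX k q (phi k q * Ygen k q * Kinvgen k q) =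
      (1 - q ^ 2) • modX k q (Egen k q * Ygen k q ^ 2 * Kinvgen k q) := by
    simp only [map_mul, modX_phi k hq, smul_mul_assoc, mul_assoc, pow_two]
  refine ⟨fun a => ?_, ?_⟩ <;> rw [← modX_eq_zero_iff, map_sub]
  · rw [map_mul _ _ a, map_mul _ a, hZ, smul_mul_assoc, mul_smul_comm,
      (commute_modX_Egen_mul_Ygen_sq_mul_Kinvgen k hq (modX k q a)).eq, sub_self]
  · rw [hZ, map_smul, sub_self]

/-- `Z = φYK⁻¹` is central in `𝒜/(X)` and
`Z ≡ (1−q²)EY²K⁻¹ mod (X)`. -/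
theorem stmt9 (k : Type) [Field k] (q : k) (hq : q ≠ 0)
    (hq' : ∀ n : ℕ, n ≠ 0 → q ^ n ≠ 1) :
    (∀ a : QSA k q,
        (phi k q * Ygen k q * Kinvgen k q) * a - a * (phi k q * Ygen k q * Kinvgen k q) ∈
          TwoSidedIdeal.span {Xgen k q}) ∧
    phi k q * Ygen k q * Kinvgen k q -
        (1 - q ^ 2) • (Egen k q * Ygen k q ^ 2 * Kinvgen k q) ∈
      TwoSidedIdeal.span {Xgen k q} :=
  stmt9_general k q hq
end

section
/- In the quantum spatial ageing algebra A, the two-sided ideal generated by E equals the ideal generated by E and X, and also equals the ideal generated by E and φ = EY − qYE: (E) = (E, X) = (E, φ). -/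
/-!
Both `X` and `φ` have the shape `E * Y - c • (Y * E)`: for `X` this is the relation
`EY = X + q⁻¹YE`, with `c = q⁻¹`, and for `φ` it is the definition, with `c = q`.
Such an element lies in `(E)`, so adjoining it as a generator does not enlarge the ideal.
-/

namespace TwoSidedIdeal

lemma smul_mem {R A : Type*} [CommSemiring R] [Ring A] [Algebra R A]
    (I : TwoSidedIdeal A) (c : R) {x : A} (hx : x ∈ I) : c • x ∈ I := by
  rw [Algebra.smul_def]
  exact I.mul_mem_left _ _ hx

lemma mul_sub_smul_mul_mem_span_singleton {R A : Type*} [CommSemiring R] [Ring A] [Algebra R A]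
    (a y : A) (c : R) : a * y - c • (y * a) ∈ span {a} :=
  have ha : a ∈ span {a} := subset_span rfl
  (span {a}).sub_mem ((span {a}).mul_mem_right _ _ ha)
    ((span {a}).smul_mem c ((span {a}).mul_mem_left _ _ ha))

lemma span_singleton_eq_span_pair {R : Type*} [NonUnitalNonAssocRing R] {a b : R}
    (hb : b ∈ span {a}) : span {a} = span {a, b} :=
  le_antisymm (span_mono (Set.singleton_subset_iff.2 (Set.mem_insert a {b})))
    (span_le.2 (Set.insert_subset (subset_span rfl) (Set.singleton_subset_iff.2 hb)))

end TwoSidedIdeal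

lemma Xgen_eq (k : Type) [Field k] (q : k) :
    Xgen k q = Egen k q * Ygen k q - q⁻¹ • (Ygen k q * Egen k q) := by
  have hEY := RingQuot.mkAlgHom_rel k (QSARel.EY (k := k) (q := q))
  simp only [map_mul, map_add, map_smul] at hEY
  change Egen k q * Ygen k q = Xgen k q + q⁻¹ • (Ygen k q * Egen k q) at hEY
  rw [hEY, add_sub_cancel_right]

theorem stmt12_general (k : Type) [Field k] (q : k) :
    TwoSidedIdeal.span {Egen k q} = TwoSidedIdeal.span {Egen k q, Xgen k q} ∧
    TwoSidedIdeal.span {Egen k q} = TwoSidedIdeal.span {Egen k q, phi k q} := by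
  constructor
  · apply TwoSidedIdeal.span_singleton_eq_span_pair
    rw [Xgen_eq]
    exact TwoSidedIdeal.mul_sub_smul_mul_mem_span_singleton _ _ _
  · exact TwoSidedIdeal.span_singleton_eq_span_pair
      (TwoSidedIdeal.mul_sub_smul_mul_mem_span_singleton _ _ _)

/-- `(E) = (E, X) = (E, φ)` as two-sided ideals of `𝒜`. -/
theorem stmt12 (k : Type) [Field k] (q : k) (hq : q ≠ 0)
    (hq' : ∀ n : ℕ, n ≠ 0 → q ^ n ≠ 1) :
    TwoSidedIdeal.span {Egen k q} = TwoSidedIdeal.span {Egen k q, Xgen k q} ∧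
    TwoSidedIdeal.span {Egen k q} = TwoSidedIdeal.span {Egen k q, phi k q} :=
  stmt12_general k q
end

section
/- Let A be a ring, S a left denominator set of A, σ: A → S^{-1}A the localization map, q a completely prime ideal of S^{-1}A, and p an ideal of A with p ⊆ σ^{-1}(q) and S^{-1}p = q. Then p = σ^{-1}(q) if and only if A/p is a domain. -/
/-!
If `p = σ⁻¹(q)`, then `A/p` embeds in the domain `S⁻¹A/q`. Conversely, an element `a`
with `σ a ∈ q = S⁻¹p` satisfies `s * a ∈ p` for some `s ∈ S` (clear the denominator and
then the `S`-torsion), and `s ∉ p` because `σ s` is a unit and `q` is proper; so `a ∈ p`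
once `A/p` is a domain.
-/

namespace TwoSidedIdeal

variable {R : Type*} [Ring R]

def IsCompletelyPrime (I : TwoSidedIdeal R) : Prop :=
  I ≠ ⊤ ∧ ∀ x y : R, x * y ∈ I → x ∈ I ∨ y ∈ I

lemma coe_eq_zero_iff_mem (I : TwoSidedIdeal R) (a : R) :
    (a : I.ringCon.Quotient) = 0 ↔ a ∈ I :=
  (RingCon.eq I.ringCon).trans (I.mem_iff a).symm

lemma isDomain_quotient_iff (I : TwoSidedIdeal R) :
    IsDomain I.ringCon.Quotient ↔ I.IsCompletelyPrime := by
  constructor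
  · intro hdom
    refine ⟨fun htop => ?_, fun x y hxy => ?_⟩
    · exact one_ne_zero ((I.coe_eq_zero_iff_mem 1).2 ((one_mem_iff I).2 htop))
    · have hmul : (x : I.ringCon.Quotient) * y = 0 := (I.coe_eq_zero_iff_mem _).2 hxy
      simpa only [coe_eq_zero_iff_mem] using mul_eq_zero.mp hmul
  · rintro ⟨hne, hprime⟩
    have : Nontrivial I.ringCon.Quotient :=
      ⟨1, 0, fun h => hne ((one_mem_iff _).1 ((I.coe_eq_zero_iff_mem 1).1 h))⟩
    have : NoZeroDivisors I.ringCon.Quotient := by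
      refine ⟨fun {x y} hxy => ?_⟩
      obtain ⟨x⟩ := x
      obtain ⟨y⟩ := y
      change (x : I.ringCon.Quotient) = 0 ∨ (y : I.ringCon.Quotient) = 0
      simpa only [coe_eq_zero_iff_mem] using hprime _ _ ((I.coe_eq_zero_iff_mem _).1 hxy)
    exact NoZeroDivisors.to_isDomain _

lemma notMem_of_isUnit {I : TwoSidedIdeal R} (hI : I ≠ ⊤) {x : R} (hx : IsUnit x) :
    x ∉ I := by
  obtain ⟨u, rfl⟩ := hx
  intro hu
  exact hI ((one_mem_iff _).1 (by simpa using I.mul_mem_left (↑u⁻¹) _ hu))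

lemma IsCompletelyPrime.comap {S : Type*} [Ring S] {I : TwoSidedIdeal S}
    (hI : I.IsCompletelyPrime) (f : R →+* S) : (comap f I).IsCompletelyPrime := by
  refine ⟨fun htop => hI.1 ((one_mem_iff I).1 ?_), fun x y hxy => ?_⟩
  · simpa only [mem_comap, map_one] using (one_mem_iff _).2 htop
  · simpa only [mem_comap] using hI.2 _ _ (by simpa only [mem_comap, map_mul] using hxy)

end TwoSidedIdeal

lemma exists_mul_mem_of_map_mem_localization {A B : Type*} [Ring A] [Ring B]
    {S : Submonoid A} {σ : A →+* B} (hker : ∀ a : A, σ a = 0 → ∃ s ∈ S, s * a = 0)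
    {p : TwoSidedIdeal A} {q : TwoSidedIdeal B}
    (hq : ∀ x ∈ q, ∃ s ∈ S, ∃ a ∈ p, σ s * x = σ a) {a : A} (ha : σ a ∈ q) :
    ∃ s ∈ S, s * a ∈ p := by
  obtain ⟨s, hs, b, hb, hsab⟩ := hq (σ a) ha
  obtain ⟨t, ht, htab⟩ := hker (s * a - b) (by rw [map_sub, map_mul, hsab, sub_self])
  refine ⟨t * s, S.mul_mem ht hs, ?_⟩
  have : t * s * a = t * b := by rwa [mul_assoc, ← sub_eq_zero, ← mul_sub]
  exact this ▸ p.mul_mem_left t b hb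

theorem stmt14_general {A B : Type*} [Ring A] [Ring B] (S : Submonoid A) (σ : A →+* B)
    -- `B = S⁻¹A` is a left localization of `A` at `S`:
    (hunit : ∀ s ∈ S, IsUnit (σ s))
    (hker : ∀ a : A, σ a = 0 → ∃ s ∈ S, s * a = 0)
    (p : TwoSidedIdeal A) (q : TwoSidedIdeal B)
    -- `q` is a completely prime ideal of `B`:
    (hq_ne : q ≠ ⊤)
    (hq_cp : ∀ x y : B, x * y ∈ q → x ∈ q ∨ y ∈ q)
    -- `p ⊆ σ⁻¹(q)`:
    (hple : ∀ a : A, a ∈ p → σ a ∈ q)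
    -- `S⁻¹p = q`:
    (hlocp : ∀ x : B, x ∈ q ↔ ∃ s ∈ S, ∃ a ∈ p, σ s * x = σ a) :
    (∀ a : A, a ∈ p ↔ σ a ∈ q) ↔ IsDomain p.ringCon.Quotient := by
  rw [p.isDomain_quotient_iff]
  constructor
  · intro hp
    have hp_comap : p = TwoSidedIdeal.comap σ q :=
      TwoSidedIdeal.ext fun a => (hp a).trans (TwoSidedIdeal.mem_comap σ).symm
    exact hp_comap ▸ TwoSidedIdeal.IsCompletelyPrime.comap ⟨hq_ne, hq_cp⟩ σ
  · rintro ⟨-, hp_prime⟩ a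
    refine ⟨hple a, fun ha => ?_⟩
    obtain ⟨s, hs, hsa⟩ := exists_mul_mem_of_map_mem_localization hker (fun x => (hlocp x).1) ha
    have hs_notMem : s ∉ p := fun h =>
      TwoSidedIdeal.notMem_of_isUnit hq_ne (hunit s hs) (hple s h)
    exact (hp_prime s a hsa).resolve_left hs_notMem

/-- let `A` be a ring, `S` a left denominator set of `A`, and
`σ : A → B = S⁻¹A` the localization map (so every element of `B` is of the form
`(σ s)⁻¹ (σ a)` and `ker σ` is the `S`-torsion). Let `q` be a completely prime
(two-sided) ideal of `B` and `p` a two-sided ideal of `A` with `p ⊆ σ⁻¹(q)` and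
`S⁻¹p = q`. Then `p = σ⁻¹(q)` if and only if `A/p` is a domain. -/
theorem stmt14 {A B : Type*} [Ring A] [Ring B] (S : Submonoid A) (σ : A →+* B)
    -- `B = S⁻¹A` is a left localization of `A` at `S`:
    (hunit : ∀ s ∈ S, IsUnit (σ s))
    (hfrac : ∀ b : B, ∃ s ∈ S, ∃ a : A, σ s * b = σ a)
    (hker : ∀ a : A, σ a = 0 → ∃ s ∈ S, s * a = 0)
    (p : TwoSidedIdeal A) (q : TwoSidedIdeal B)
    -- `q` is a completely prime ideal of `B`:
    (hq_ne : q ≠ ⊤)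
    (hq_cp : ∀ x y : B, x * y ∈ q → x ∈ q ∨ y ∈ q)
    -- `p ⊆ σ⁻¹(q)`:
    (hple : ∀ a : A, a ∈ p → σ a ∈ q)
    -- `S⁻¹p = q`:
    (hlocp : ∀ x : B, x ∈ q ↔ ∃ s ∈ S, ∃ a ∈ p, σ s * x = σ a) :
    (∀ a : A, a ∈ p ↔ σ a ∈ q) ↔ IsDomain p.ringCon.Quotient :=
  stmt14_general S σ hunit hker p q hq_ne hq_cp hple hlocp
end

section
/- The automorphisms σ_{λ,μ,γ,i} of the quantum spatial ageing algebra A satisfy the composition rule σ_{λ,μ,γ,i} ∘ σ_{λ',μ',γ',j} = σ_{λλ'γ^j, μμ'γ^{-j}, γγ', i+j}, and σ_{λ,μ,γ,i}^{-1} = σ_{λ^{-1}γ^i, μ^{-1}γ^{-i}, γ^{-1}, -i}. -/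
/-- `K` as a unit of `𝒜` (with inverse `K⁻¹`). -/
noncomputable def Kunit (k : Type) [Field k] (q : k) : (QSA k q)ˣ where
  val := Kgen k q
  inv := Kinvgen k q
  val_inv := by
    rw [Kgen, Kinvgen, ← map_mul, RingQuot.mkAlgHom_rel k QSARel.KKinv, map_one]
  inv_val := by
    rw [Kinvgen, Kgen, ← map_mul, RingQuot.mkAlgHom_rel k QSARel.KinvK, map_one]

/-- `σ` is the automorphism `σ_{λ,μ,γ,i}` of `𝒜`, i.e. it is given on the generators by
`X ↦ λKⁱX`, `Y ↦ μK⁻ⁱY`, `K ↦ γK`, `E ↦ λμ⁻¹q⁻²ⁱK²ⁱE`. -/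
noncomputable def IsSigma (k : Type) [Field k] (q lam mu gam : k) (i : ℤ)
    (σ : QSA k q ≃ₐ[k] QSA k q) : Prop :=
  σ (Xgen k q) = lam • (((Kunit k q ^ i : (QSA k q)ˣ) : QSA k q) * Xgen k q) ∧
  σ (Ygen k q) = mu • (((Kunit k q ^ (-i) : (QSA k q)ˣ) : QSA k q) * Ygen k q) ∧
  σ (Kgen k q) = gam • Kgen k q ∧
  σ (Egen k q) =
    (lam * mu⁻¹ * q ^ (-2 * i)) •
      (((Kunit k q ^ (2 * i) : (QSA k q)ˣ) : QSA k q) * Egen k q)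

/-!
An algebra map out of `𝒜` is determined by its values on `E`, `K`, `X`, `Y`, the value on `K⁻¹`
being forced as the inverse of the image of `K`. So it suffices to evaluate `σ ∘ σ'` on these
generators, where the one input beyond the defining formulas is `σ(Kⁿ) = γⁿKⁿ` for all `n ∈ ℤ`.
The inverse formula follows because the composite parameters reduce to `(1, 1, 1, 0)`, and
`σ_{1,1,1,0}` is the identity.
-/

theorem AlgHom.map_units_zpow_of_map_eq_smul {k A B : Type*} [Semifield k] [Semiring A]
    [Semiring B] [Algebra k A] [Algebra k B] (f : A →ₐ[k] B) {u : Aˣ} {v : Bˣ} {c : k}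
    (hc : c ≠ 0) (hu : f u = c • (v : B)) (n : ℤ) :
    f ↑(u ^ n) = c ^ n • (↑(v ^ n) : B) := by
  set a : Bˣ := Units.map (algebraMap k B : k →* B) (Units.mk0 c hc)
  have hmap : Units.map (f : A →* B) u = a * v := by
    ext
    simp [a, hu, Algebra.smul_def]
  have hcomm : Commute a v := Units.ext (Algebra.commutes c (v : B))
  calc f ↑(u ^ n) = ↑((Units.map (f : A →* B) u) ^ n) := by rw [← map_zpow]; rfl
    _ = c ^ n • (↑(v ^ n) : B) := by
      rw [hmap, hcomm.mul_zpow, Units.val_mul, ← map_zpow, Units.coe_map,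
        Units.val_zpow_eq_zpow_val, Units.val_mk0, Algebra.smul_def]
      rfl

theorem QSA.algHom_ext {k : Type} [Field k] {q : k} {B : Type*} [Semiring B] [Algebra k B]
    {f g : QSA k q →ₐ[k] B}
    (hE : f (Egen k q) = g (Egen k q)) (hK : f (Kgen k q) = g (Kgen k q))
    (hX : f (Xgen k q) = g (Xgen k q)) (hY : f (Ygen k q) = g (Ygen k q)) : f = g := by
  have hKunit : Units.map (f : QSA k q →* B) (Kunit k q) =
      Units.map (g : QSA k q →* B) (Kunit k q) :=
    Units.ext hK
  have hKinv : f (Kinvgen k q) = g (Kinvgen k q) :=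
    congrArg (fun u : Bˣ => (u⁻¹ : Bˣ).val) hKunit
  apply RingQuot.ringQuot_ext'
  apply FreeAlgebra.hom_ext
  funext x
  cases x
  exacts [hE, hK, hKinv, hX, hY]

namespace IsSigma

variable {k : Type} [Field k] {q : k}

theorem refl : IsSigma k q 1 1 1 0 AlgEquiv.refl := by
  refine ⟨?_, ?_, ?_, ?_⟩ <;> simp

variable {lam mu gam lam' mu' gam' : k} {i j : ℤ} {σ σ' : QSA k q ≃ₐ[k] QSA k q}

theorem unique (h : IsSigma k q lam mu gam i σ) (h' : IsSigma k q lam mu gam i σ') :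
    σ = σ' :=
  AlgEquiv.coe_toAlgHom_injective <| QSA.algHom_ext (h.2.2.2.trans h'.2.2.2.symm)
    (h.2.2.1.trans h'.2.2.1.symm) (h.1.trans h'.1.symm) (h.2.1.trans h'.2.1.symm)

theorem map_Kunit_zpow (h : IsSigma k q lam mu gam i σ) (hgam : gam ≠ 0) (n : ℤ) :
    σ ↑(Kunit k q ^ n) = gam ^ n • (↑(Kunit k q ^ n) : QSA k q) :=
  (σ : QSA k q →ₐ[k] QSA k q).map_units_zpow_of_map_eq_smul (u := Kunit k q)
    (v := Kunit k q) hgam h.2.2.1 n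

theorem comp (h : IsSigma k q lam mu gam i σ) (h' : IsSigma k q lam' mu' gam' j σ')
    (hq : q ≠ 0) (hgam : gam ≠ 0) :
    IsSigma k q (lam * lam' * gam ^ j) (mu * mu' * gam ^ (-j)) (gam * gam') (i + j)
      (σ'.trans σ) := by
  have hKpow := h.map_Kunit_zpow hgam
  obtain ⟨hX, hY, hK, hE⟩ := h
  obtain ⟨hX', hY', hK', hE'⟩ := h'
  refine ⟨?_, ?_, ?_, ?_⟩ <;> simp only [AlgEquiv.trans_apply]
  · rw [hX', map_smul, map_mul, hKpow, hX, add_comm i, zpow_add, Units.val_mul]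
    simp only [smul_mul_assoc, mul_smul_comm, smul_smul, mul_assoc]
    ring_nf
  · rw [hY', map_smul, map_mul, hKpow, hY, neg_add_rev, zpow_add, Units.val_mul]
    simp only [smul_mul_assoc, mul_smul_comm, smul_smul, mul_assoc]
    ring_nf
  · rw [hK', map_smul, hK, smul_smul, mul_comm]
  · rw [hE', map_smul, map_mul, hKpow, hE, show 2 * (i + j) = 2 * j + 2 * i by ring, zpow_add,
      Units.val_mul]
    simp only [smul_mul_assoc, mul_smul_comm, smul_smul, mul_assoc]
    congr 1
    rw [show -2 * (i + j) = -2 * i + -2 * j by ring, zpow_add₀ hq, zpow_neg, two_mul,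
      zpow_add₀ hgam]
    field_simp

end IsSigma

theorem stmt16_general (k : Type) [Field k] (q : k) (hq : q ≠ 0)
    (lam mu gam lam' mu' gam' : k)
    (hlam : lam ≠ 0) (hmu : mu ≠ 0) (hgam : gam ≠ 0)
    (i j : ℤ)
    (σ₁ σ₂ σ₃ σ₄ : QSA k q ≃ₐ[k] QSA k q)
    (h₁ : IsSigma k q lam mu gam i σ₁)
    (h₂ : IsSigma k q lam' mu' gam' j σ₂)
    (h₃ : IsSigma k q (lam * lam' * gam ^ j) (mu * mu' * gam ^ (-j)) (gam * gam') (i + j) σ₃)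
    (h₄ : IsSigma k q (lam⁻¹ * gam ^ i) (mu⁻¹ * gam ^ (-i)) gam⁻¹ (-i) σ₄) :
    (∀ a : QSA k q, σ₁ (σ₂ a) = σ₃ a) ∧
    (∀ a : QSA k q, σ₁ (σ₄ a) = a) ∧
    (∀ a : QSA k q, σ₄ (σ₁ a) = a) := by
  have h₁₂ : σ₂.trans σ₁ = σ₃ := (h₁.comp h₂ hq hgam).unique h₃
  have h₁₄ : σ₄.trans σ₁ = AlgEquiv.refl := by
    refine IsSigma.unique ?_ IsSigma.refl
    convert h₁.comp h₄ hq hgam using 1 <;> simp [zpow_neg, hgam] <;> field_simp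
  have h₄₁ : σ₁.trans σ₄ = AlgEquiv.refl := by
    refine IsSigma.unique ?_ IsSigma.refl
    convert h₄.comp h₁ hq (inv_ne_zero hgam) using 1 <;> simp [zpow_neg, hgam] <;> field_simp
  exact ⟨fun a => DFunLike.congr_fun h₁₂ a, fun a => DFunLike.congr_fun h₁₄ a,
    fun a => DFunLike.congr_fun h₄₁ a⟩

/-- the automorphisms `σ_{λ,μ,γ,i}` satisfy
`σ_{λ,μ,γ,i} ∘ σ_{λ',μ',γ',j} = σ_{λλ'γʲ, μμ'γ⁻ʲ, γγ', i+j}` and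
`σ_{λ,μ,γ,i}⁻¹ = σ_{λ⁻¹γⁱ, μ⁻¹γ⁻ⁱ, γ⁻¹, −i}`. -/
theorem stmt16 (k : Type) [Field k] (q : k) (hq : q ≠ 0)
    (hq' : ∀ n : ℕ, n ≠ 0 → q ^ n ≠ 1)
    (lam mu gam lam' mu' gam' : k)
    (hlam : lam ≠ 0) (hmu : mu ≠ 0) (hgam : gam ≠ 0)
    (hlam' : lam' ≠ 0) (hmu' : mu' ≠ 0) (hgam' : gam' ≠ 0) (i j : ℤ)
    (σ₁ σ₂ σ₃ σ₄ : QSA k q ≃ₐ[k] QSA k q)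
    (h₁ : IsSigma k q lam mu gam i σ₁)
    (h₂ : IsSigma k q lam' mu' gam' j σ₂)
    (h₃ : IsSigma k q (lam * lam' * gam ^ j) (mu * mu' * gam ^ (-j)) (gam * gam') (i + j) σ₃)
    (h₄ : IsSigma k q (lam⁻¹ * gam ^ i) (mu⁻¹ * gam ^ (-i)) gam⁻¹ (-i) σ₄) :
    (∀ a : QSA k q, σ₁ (σ₂ a) = σ₃ a) ∧
    (∀ a : QSA k q, σ₁ (σ₄ a) = a) ∧
    (∀ a : QSA k q, σ₄ (σ₁ a) = a) :=
  stmt16_general k q hq lam mu gam lam' mu' gam' hlam hmu hgam i j σ₁ σ₂ σ₃ σ₄ h₁ h₂ h₃ h₄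
end

section
/- Let N be a module over the quantum plane Λ = K⟨t, u | tu = q^2ut⟩ over a field extension D/p of K on which K acts by a fixed scalar; then the formulas K(Y^i⊗v) = q^{-i}Y^i⊗Kv, Y(Y^i⊗v) = Y^{i+1}⊗v, X(Y^i⊗v) = q^iY^{i-1}⊗tv, E(Y^i⊗v) = Y^{i-2}⊗((q^{-i}u − q^it)/(q^{-1}−q))v define on the vector space K[Y,Y^{-1}]⊗N a module structure over the quantum spatial ageing algebra A, i.e., these operators satisfy the defining relations EK = q^{-2}KE, XK = q^{-1}KX, YK = qKY, EX = qXE, EY = X + q^{-1}YE, qYX = XY. -/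
noncomputable section

variable (k : Type) [Field k] (q : k) {N : Type} [AddCommGroup N] [Module k N]

/-- The action of `K` on `𝕂[Y,Y⁻¹] ⊗ N = ⊕_{i∈ℤ} Yⁱ ⊗ N`:
`K(Yⁱ ⊗ v) = q⁻ⁱ Yⁱ ⊗ Kv`. -/
def KM (KN : N →ₗ[k] N) (f : ℤ →₀ N) : ℤ →₀ N :=
  f.sum fun i v => Finsupp.single i ((q ^ (-i) : k) • KN v)

/-- The action of `Y`: `Y(Yⁱ ⊗ v) = Yⁱ⁺¹ ⊗ v`. -/
def YM (f : ℤ →₀ N) : ℤ →₀ N :=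
  f.sum fun i v => Finsupp.single (i + 1) v

/-- The action of `X`: `X(Yⁱ ⊗ v) = qⁱ Yⁱ⁻¹ ⊗ tv`. -/
def XM (tN : N →ₗ[k] N) (f : ℤ →₀ N) : ℤ →₀ N :=
  f.sum fun i v => Finsupp.single (i - 1) ((q ^ i : k) • tN v)

/-- The action of `E`: `E(Yⁱ ⊗ v) = Yⁱ⁻² ⊗ ((q⁻ⁱu − qⁱt)/(q⁻¹ − q))v`. -/
def EM (tN uN : N →ₗ[k] N) (f : ℤ →₀ N) : ℤ →₀ N :=
  f.sum fun i v =>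
    Finsupp.single (i - 2)
      ((q⁻¹ - q)⁻¹ • ((q ^ (-i) : k) • uN v - (q ^ i : k) • tN v))

/-!
Each of the four operators is a weighted shift `Yⁱ ⊗ v ↦ Y^{e i} ⊗ φᵢ v` of `ℤ →₀ N`, and a
composite of weighted shifts is the weighted shift along the composite index map with the
products of the weights. So every relation reduces, index by index, to an identity of
operators on `N`: besides bookkeeping of powers of `q`, `EX = qXE` uses `tu = q²ut`, the
relations with `K` use that `K` commutes with `t` and `u`, and `EY = X + q⁻¹YE` comes down to
the normalisation `(q⁻¹ - q)⁻¹` cancelling against `q⁻¹ - q`.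
-/

namespace Finsupp

variable {R ι M : Type*} [CommSemiring R] [AddCommMonoid M] [Module R M]

def weightedShift (e : ι → ι) (φ : ι → M →ₗ[R] M) : (ι →₀ M) →ₗ[R] ι →₀ M :=
  lsum R fun i => lsingle (e i) ∘ₗ φ i

@[simp]
lemma weightedShift_single (e : ι → ι) (φ : ι → M →ₗ[R] M) (i : ι) (v : M) :
    weightedShift e φ (single i v) = single (e i) (φ i v) := by
  simp [weightedShift]

lemma weightedShift_comp {e e' e'' : ι → ι} (h : ∀ i, e (e' i) = e'' i)
    (φ ψ : ι → M →ₗ[R] M) :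
    weightedShift e φ ∘ₗ weightedShift e' ψ = weightedShift e'' fun i => φ (e' i) ∘ₗ ψ i :=
  lhom_ext fun i v => by simp [h]

lemma weightedShift_add (e : ι → ι) (φ ψ : ι → M →ₗ[R] M) :
    weightedShift e (φ + ψ) = weightedShift e φ + weightedShift e ψ :=
  lhom_ext fun i v => by simp [single_add]

lemma weightedShift_smul (e : ι → ι) (c : R) (φ : ι → M →ₗ[R] M) :
    weightedShift e (c • φ) = c • weightedShift e φ :=
  lhom_ext fun i v => by simp

end Finsupp

open Finsupp

lemma inv_sub_self_ne_zero {K : Type*} [DivisionRing K] {q : K} (hq : q ≠ 0)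
    (hq2 : q ^ 2 ≠ 1) : q⁻¹ - q ≠ 0 := by
  contrapose! hq2
  calc q ^ 2 = q * q⁻¹ := by rw [sq, sub_eq_zero.mp hq2]
    _ = 1 := mul_inv_cancel₀ hq

section Operators

variable (KN tN uN : N →ₗ[k] N)

def KMₗ : (ℤ →₀ N) →ₗ[k] ℤ →₀ N := weightedShift id fun i => (q ^ (-i) : k) • KN

def YMₗ : (ℤ →₀ N) →ₗ[k] ℤ →₀ N := weightedShift (· + 1) fun _ => LinearMap.id

def XMₗ : (ℤ →₀ N) →ₗ[k] ℤ →₀ N := weightedShift (· - 1) fun i => (q ^ i : k) • tN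

def EMₗ : (ℤ →₀ N) →ₗ[k] ℤ →₀ N :=
  weightedShift (· - 2) fun i => (q⁻¹ - q)⁻¹ • ((q ^ (-i) : k) • uN - (q ^ i : k) • tN)

lemma coe_KMₗ : ⇑(KMₗ k q KN) = KM k q KN := rfl

lemma coe_YMₗ : ⇑(YMₗ (N := N) k) = YM := rfl

lemma coe_XMₗ : ⇑(XMₗ k q tN) = XM k q tN := rfl

lemma coe_EMₗ : ⇑(EMₗ k q tN uN) = EM k q tN uN := rfl

end Operators

section Relations

variable {k q} {KN tN uN : N →ₗ[k] N}

lemma EMₗ_comp_KMₗ (hq : q ≠ 0) (hKt : ∀ v, KN (tN v) = tN (KN v))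
    (hKu : ∀ v, KN (uN v) = uN (KN v)) :
    EMₗ k q tN uN ∘ₗ KMₗ k q KN = (q ^ 2)⁻¹ • KMₗ k q KN ∘ₗ EMₗ k q tN uN := by
  rw [EMₗ, KMₗ, weightedShift_comp (fun _ => rfl), weightedShift_comp (fun _ => rfl),
    ← weightedShift_smul]
  congr 1
  ext i v
  simp only [LinearMap.comp_apply, LinearMap.smul_apply, map_smul, map_sub, hKt, hKu,
    LinearMap.sub_apply, Pi.smul_apply]
  match_scalars <;> simp only [id, zpow_neg, zpow_sub₀ hq] <;> field_simp

lemma XMₗ_comp_KMₗ (hq : q ≠ 0) (hKt : ∀ v, KN (tN v) = tN (KN v)) :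
    XMₗ k q tN ∘ₗ KMₗ k q KN = q⁻¹ • KMₗ k q KN ∘ₗ XMₗ k q tN := by
  rw [XMₗ, KMₗ, weightedShift_comp (fun _ => rfl), weightedShift_comp (fun _ => rfl),
    ← weightedShift_smul]
  congr 1
  ext i v
  simp only [LinearMap.comp_apply, LinearMap.smul_apply, map_smul, hKt, Pi.smul_apply]
  match_scalars
  simp only [id, zpow_neg, zpow_sub₀ hq, zpow_one]
  field_simp

lemma YMₗ_comp_KMₗ (hq : q ≠ 0) :
    YMₗ k ∘ₗ KMₗ k q KN = q • KMₗ k q KN ∘ₗ YMₗ k := by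
  rw [YMₗ, KMₗ, weightedShift_comp (fun _ => rfl), weightedShift_comp (fun _ => rfl),
    ← weightedShift_smul]
  congr 1
  ext i v
  simp only [LinearMap.comp_apply, LinearMap.smul_apply, LinearMap.id_apply, Pi.smul_apply,
    map_smul, smul_smul]
  congr 1
  simp only [zpow_neg, zpow_add₀ hq, zpow_one]
  field_simp

lemma EMₗ_comp_XMₗ (hq : q ≠ 0) (htu : ∀ v, tN (uN v) = q ^ 2 • uN (tN v)) :
    EMₗ k q tN uN ∘ₗ XMₗ k q tN = q • XMₗ k q tN ∘ₗ EMₗ k q tN uN := by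
  rw [EMₗ, XMₗ, weightedShift_comp (e'' := (· - 3)) (fun _ => by ring),
    weightedShift_comp (e'' := (· - 3)) (fun _ => by ring), ← weightedShift_smul]
  congr 1
  ext i v
  simp only [LinearMap.comp_apply, LinearMap.smul_apply, map_smul, map_sub, htu,
    LinearMap.sub_apply, Pi.smul_apply]
  match_scalars <;> simp only [zpow_neg, zpow_sub₀ hq, zpow_one] <;> field_simp

lemma EMₗ_comp_YMₗ (hq : q ≠ 0) (hq2 : q ^ 2 ≠ 1) :
    EMₗ k q tN uN ∘ₗ YMₗ k = XMₗ k q tN + q⁻¹ • YMₗ k ∘ₗ EMₗ k q tN uN := by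
  rw [EMₗ, XMₗ, YMₗ, weightedShift_comp (e'' := (· - 1)) (fun _ => by ring),
    weightedShift_comp (e'' := (· - 1)) (fun _ => by ring), ← weightedShift_smul,
    ← weightedShift_add]
  congr 1
  ext i v
  simp only [LinearMap.comp_apply, LinearMap.smul_apply, LinearMap.id_apply,
    LinearMap.sub_apply, LinearMap.add_apply, Pi.smul_apply, Pi.add_apply]
  match_scalars
  · rw [neg_add, zpow_add₀ hq, zpow_neg_one]
    ring
  · have := inv_sub_self_ne_zero hq hq2
    rw [zpow_add_one₀ hq]
    field_simp
    ring

lemma smul_YMₗ_comp_XMₗ (hq : q ≠ 0) :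
    q • YMₗ k ∘ₗ XMₗ k q tN = XMₗ k q tN ∘ₗ YMₗ k := by
  rw [XMₗ, YMₗ, weightedShift_comp (e'' := id) (fun _ => by simp),
    weightedShift_comp (e'' := id) (fun _ => by simp), ← weightedShift_smul]
  congr 1
  ext i v
  simp only [LinearMap.comp_apply, LinearMap.smul_apply, LinearMap.id_apply, Pi.smul_apply,
    map_smul, smul_smul, zpow_add₀ hq, zpow_one, mul_comm]

end Relations

/-- if `N` is a module over the quantum plane
`Λ = 𝕂⟨t, u | tu = q²ut⟩` on which `K` acts commuting with `t` and `u`, then the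
formulas `K(Yⁱ⊗v) = q⁻ⁱYⁱ⊗Kv`, `Y(Yⁱ⊗v) = Yⁱ⁺¹⊗v`, `X(Yⁱ⊗v) = qⁱYⁱ⁻¹⊗tv`,
`E(Yⁱ⊗v) = Yⁱ⁻²⊗((q⁻ⁱu−qⁱt)/(q⁻¹−q))v` make `𝕂[Y,Y⁻¹] ⊗ N = ⊕_{i∈ℤ} Yⁱ⊗N` a module
over the quantum spatial ageing algebra `𝒜`, i.e. the operators satisfy the defining
relations `EK = q⁻²KE`, `XK = q⁻¹KX`, `YK = qKY`, `EX = qXE`, `EY = X + q⁻¹YE`,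
`qYX = XY`. -/
theorem stmt19 (hq : q ≠ 0) (hq' : ∀ n : ℕ, n ≠ 0 → q ^ n ≠ 1)
    (KN tN uN : N →ₗ[k] N)
    (htu : ∀ v : N, tN (uN v) = q ^ 2 • uN (tN v))
    (hKt : ∀ v : N, KN (tN v) = tN (KN v))
    (hKu : ∀ v : N, KN (uN v) = uN (KN v)) :
    (∀ f : ℤ →₀ N, EM k q tN uN (KM k q KN f) = (q ^ 2)⁻¹ • KM k q KN (EM k q tN uN f)) ∧
    (∀ f : ℤ →₀ N, XM k q tN (KM k q KN f) = q⁻¹ • KM k q KN (XM k q tN f)) ∧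
    (∀ f : ℤ →₀ N, YM (KM k q KN f) = q • KM k q KN (YM f)) ∧
    (∀ f : ℤ →₀ N, EM k q tN uN (XM k q tN f) = q • XM k q tN (EM k q tN uN f)) ∧
    (∀ f : ℤ →₀ N, EM k q tN uN (YM f) = XM k q tN f + q⁻¹ • YM (EM k q tN uN f)) ∧
    (∀ f : ℤ →₀ N, q • YM (XM k q tN f) = XM k q tN (YM f)) := by
  rw [← coe_KMₗ, ← coe_YMₗ k, ← coe_XMₗ, ← coe_EMₗ]
  exact ⟨LinearMap.congr_fun (EMₗ_comp_KMₗ hq hKt hKu),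
    LinearMap.congr_fun (XMₗ_comp_KMₗ hq hKt),
    LinearMap.congr_fun (YMₗ_comp_KMₗ hq),
    LinearMap.congr_fun (EMₗ_comp_XMₗ hq htu),
    LinearMap.congr_fun (EMₗ_comp_YMₗ hq (hq' 2 two_ne_zero)),
    LinearMap.congr_fun (smul_YMₗ_comp_XMₗ hq)⟩

end
end
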